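/- Let μ : E → F be a vector bundle isomorphism over a diffeomorphism, acting on vector smoothing operators by (μ_*Φ)(u) := μ_*(Φ(μ*u)). Then the push-forward μ_* preserves all the defining properties of test objects and 0-test objects: (VSO1), (VSO2), (VSO2'), (VSO3), (VSO4), (VSO4'), as well as their uniform variants. In particular, μ_* maps test objects on E to test objects on F and 0-test objects to 0-test objects. -/

import Mathlib

/-!
Push-forward along `μ` is conjugation by the topological isomorphisms `μ_*` of sections and
distributions.  Since `μ_*` commutes with the embedding `Γ ↪ D'`, it carries `ι ∘ Φ_ε` and
`Φ_ε ∘ ι` to their conjugates under the algebra isomorphisms `L(D'(E)) ≃ L(D'(F))` and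
`L(Γ(E)) ≃ L(Γ(F))`, which fix the identity.  Convergence is preserved by continuity and every
continuous seminorm pulls back to a continuous seminorm, which gives (VSO2)–(VSO4) and their
uniform versions.  For (VSO1) one pulls the metric on `N` back along `f`: its balls are the
preimages of the original balls, so the support condition transfers point by point.
-/

set_option linter.unusedSectionVars false

noncomputable section

open Filter Topology Set

/-- `f ε = O(g ε)` as `ε → 0⁺`. -/
def BigOeps (f g : ℝ → ℝ) : Prop :=
  ∃ C > (0:ℝ), ∃ ε₁ > (0:ℝ), ∀ ε : ℝ, 0 < ε → ε ≤ ε₁ → f ε ≤ C * g ε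

section VSOConditions

variable {M : Type*} [TopologicalSpace M] {Fib : Type*} [Zero Fib]
variable {Γ D : Type*}
  [AddCommGroup Γ] [Module ℝ Γ] [TopologicalSpace Γ] [IsTopologicalAddGroup Γ] [ContinuousSMul ℝ Γ]
  [AddCommGroup D] [Module ℝ D] [TopologicalSpace D] [IsTopologicalAddGroup D] [ContinuousSMul ℝ D]

/-- The metric ball of radius `r` around `x` for a (Riemannian) distance function `d`. -/
def mball (d : M → M → ℝ) (x : M) (r : ℝ) : Set M := {y | d x y < r}

/-- (VSO1): locality of supports, relative to the open set `Uset`.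
`ev` is evaluation of sections at points, `van u A` means "the distribution `u`
vanishes on `A`", `mets` is the set of admissible Riemannian distance functions. -/
def VSO1 (Uset : Set M) (ev : Γ → M → Fib) (van : D → Set M → Prop)
    (mets : Set (M → M → ℝ)) (Φ : ℝ → (D →L[ℝ] Γ)) : Prop :=
  ∀ d ∈ mets, ∀ x₀ ∈ Uset, ∃ V : Set M, IsOpen V ∧ x₀ ∈ V ∧ V ⊆ Uset ∧
    ∀ r > (0:ℝ), ∃ ε₀ > (0:ℝ), ∀ ε : ℝ, 0 < ε → ε ≤ ε₀ →
      ∀ x ∈ V, ∀ u : D, van u (mball d x r) → ev (Φ ε u) x = 0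

/-- (VSO2): `Φ_ε → id` in `L(D', D')` (strong topology). `j` is the embedding of
smooth sections into distributions. -/
def VSO2 (j : Γ →L[ℝ] D) (Φ : ℝ → (D →L[ℝ] Γ)) : Prop :=
  Tendsto (fun ε => j.comp (Φ ε)) (𝓝[>] (0:ℝ)) (𝓝 (ContinuousLinearMap.id ℝ D))

/-- (VSO2'): `Φ_ε → 0` in `L(D', D')`. -/
def VSO2' (j : Γ →L[ℝ] D) (Φ : ℝ → (D →L[ℝ] Γ)) : Prop :=
  Tendsto (fun ε => j.comp (Φ ε)) (𝓝[>] (0:ℝ)) (𝓝 0)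

/-- (VSO3): moderate growth of all continuous seminorms of `Φ_ε` in `VSO = L(D', Γ)`. -/
def VSO3 (Φ : ℝ → (D →L[ℝ] Γ)) : Prop :=
  ∀ p : Seminorm ℝ (D →L[ℝ] Γ), Continuous p →
    ∃ N : ℕ, BigOeps (fun ε => p (Φ ε)) (fun ε => ε ^ (-(N:ℤ)))

/-- (VSO4): rapid convergence `Φ_ε|_Γ → id` in `L(Γ, Γ)`. -/
def VSO4 (j : Γ →L[ℝ] D) (Φ : ℝ → (D →L[ℝ] Γ)) : Prop :=
  ∀ p : Seminorm ℝ (Γ →L[ℝ] Γ), Continuous p → ∀ m : ℕ,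
    BigOeps (fun ε => p ((Φ ε).comp j - ContinuousLinearMap.id ℝ Γ)) (fun ε => ε ^ m)

/-- (VSO4'): rapid decay of `Φ_ε|_Γ` in `L(Γ, Γ)`. -/
def VSO4' (j : Γ →L[ℝ] D) (Φ : ℝ → (D →L[ℝ] Γ)) : Prop :=
  ∀ p : Seminorm ℝ (Γ →L[ℝ] Γ), Continuous p → ∀ m : ℕ,
    BigOeps (fun ε => p ((Φ ε).comp j)) (fun ε => ε ^ m)

/-- A test object: a net of vector smoothing operators satisfying (VSO1)–(VSO4). -/
def IsTestObject (Uset : Set M) (j : Γ →L[ℝ] D) (ev : Γ → M → Fib) (van : D → Set M → Prop)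
    (mets : Set (M → M → ℝ)) (Φ : ℝ → (D →L[ℝ] Γ)) : Prop :=
  VSO1 Uset ev van mets Φ ∧ VSO2 j Φ ∧ VSO3 Φ ∧ VSO4 j Φ

/-- A 0-test object: a net satisfying (VSO1), (VSO2'), (VSO3), (VSO4'). -/
def IsZeroTestObject (Uset : Set M) (j : Γ →L[ℝ] D) (ev : Γ → M → Fib) (van : D → Set M → Prop)
    (mets : Set (M → M → ℝ)) (Φ : ℝ → (D →L[ℝ] Γ)) : Prop :=
  VSO1 Uset ev van mets Φ ∧ VSO2' j Φ ∧ VSO3 Φ ∧ VSO4' j Φ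

/-- (UVSO1): (VSO1) uniformly over a set `S` of nets. -/
def UVSO1 (Uset : Set M) (ev : Γ → M → Fib) (van : D → Set M → Prop)
    (mets : Set (M → M → ℝ)) (S : Set (ℝ → (D →L[ℝ] Γ))) : Prop :=
  ∀ d ∈ mets, ∀ x₀ ∈ Uset, ∃ V : Set M, IsOpen V ∧ x₀ ∈ V ∧ V ⊆ Uset ∧
    ∀ r > (0:ℝ), ∃ ε₀ > (0:ℝ), ∀ Φ ∈ S, ∀ ε : ℝ, 0 < ε → ε ≤ ε₀ →
      ∀ x ∈ V, ∀ u : D, van u (mball d x r) → ev (Φ ε u) x = 0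

/-- (UVSO2): `Φ_ε → id` in `L(D', D')` uniformly over `S`, measured by seminorms. -/
def UVSO2 (j : Γ →L[ℝ] D) (S : Set (ℝ → (D →L[ℝ] Γ))) : Prop :=
  ∀ p : Seminorm ℝ (D →L[ℝ] D), Continuous p → ∀ δ > (0:ℝ), ∃ ε₀ > (0:ℝ),
    ∀ Φ ∈ S, ∀ ε : ℝ, 0 < ε → ε ≤ ε₀ →
      p (j.comp (Φ ε) - ContinuousLinearMap.id ℝ D) ≤ δ

/-- (UVSO2'): `Φ_ε → 0` in `L(D', D')` uniformly over `S`. -/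
def UVSO2' (j : Γ →L[ℝ] D) (S : Set (ℝ → (D →L[ℝ] Γ))) : Prop :=
  ∀ p : Seminorm ℝ (D →L[ℝ] D), Continuous p → ∀ δ > (0:ℝ), ∃ ε₀ > (0:ℝ),
    ∀ Φ ∈ S, ∀ ε : ℝ, 0 < ε → ε ≤ ε₀ → p (j.comp (Φ ε)) ≤ δ

/-- (UVSO3): (VSO3) uniformly over `S`. -/
def UVSO3 (S : Set (ℝ → (D →L[ℝ] Γ))) : Prop :=
  ∀ p : Seminorm ℝ (D →L[ℝ] Γ), Continuous p → ∃ N : ℕ, ∃ C > (0:ℝ), ∃ ε₁ > (0:ℝ),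
    ∀ Φ ∈ S, ∀ ε : ℝ, 0 < ε → ε ≤ ε₁ → p (Φ ε) ≤ C * ε ^ (-(N:ℤ))

/-- (UVSO4): (VSO4) uniformly over `S`. -/
def UVSO4 (j : Γ →L[ℝ] D) (S : Set (ℝ → (D →L[ℝ] Γ))) : Prop :=
  ∀ p : Seminorm ℝ (Γ →L[ℝ] Γ), Continuous p → ∀ m : ℕ, ∃ C > (0:ℝ), ∃ ε₁ > (0:ℝ),
    ∀ Φ ∈ S, ∀ ε : ℝ, 0 < ε → ε ≤ ε₁ →
      p ((Φ ε).comp j - ContinuousLinearMap.id ℝ Γ) ≤ C * ε ^ m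

/-- (UVSO4'): (VSO4') uniformly over `S`. -/
def UVSO4' (j : Γ →L[ℝ] D) (S : Set (ℝ → (D →L[ℝ] Γ))) : Prop :=
  ∀ p : Seminorm ℝ (Γ →L[ℝ] Γ), Continuous p → ∀ m : ℕ, ∃ C > (0:ℝ), ∃ ε₁ > (0:ℝ),
    ∀ Φ ∈ S, ∀ ε : ℝ, 0 < ε → ε ≤ ε₁ → p ((Φ ε).comp j) ≤ C * ε ^ m

/-- A uniform set of test objects. -/
def IsUniformTOSet (Uset : Set M) (j : Γ →L[ℝ] D) (ev : Γ → M → Fib) (van : D → Set M → Prop)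
    (mets : Set (M → M → ℝ)) (S : Set (ℝ → (D →L[ℝ] Γ))) : Prop :=
  (∀ Φ ∈ S, IsTestObject Uset j ev van mets Φ) ∧
    UVSO1 Uset ev van mets S ∧ UVSO2 j S ∧ UVSO3 S ∧ UVSO4 j S

/-- A uniform set of 0-test objects. -/
def IsUniformZeroTOSet (Uset : Set M) (j : Γ →L[ℝ] D) (ev : Γ → M → Fib) (van : D → Set M → Prop)
    (mets : Set (M → M → ℝ)) (S : Set (ℝ → (D →L[ℝ] Γ))) : Prop :=
  (∀ Φ ∈ S, IsZeroTestObject Uset j ev van mets Φ) ∧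
    UVSO1 Uset ev van mets S ∧ UVSO2' j S ∧ UVSO3 S ∧ UVSO4' j S

end VSOConditions
/-!
Abstraction: `ΓE, DE` (resp. `ΓF, DF`) are the spaces of sections/distributions of `E → M`
(resp. `F → N`), `μΓ, μD` the push-forwards of sections/distributions along `μ` (continuous
linear equivalences), `f : M ≃ₜ N` the underlying diffeomorphism.  The hypotheses record the
classical compatibilities: `j` commutes with `μ`, evaluation/vanishing correspond under `μ`
and `f`, and pullbacks of admissible Riemannian distance functions are admissible.
-/

section Statement5

variable {M N : Type*} [TopologicalSpace M] [TopologicalSpace N] {Fib : Type*} [Zero Fib]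
variable {ΓE DE ΓF DF : Type*}
  [AddCommGroup ΓE] [Module ℝ ΓE] [TopologicalSpace ΓE] [IsTopologicalAddGroup ΓE]
  [ContinuousSMul ℝ ΓE]
  [AddCommGroup DE] [Module ℝ DE] [TopologicalSpace DE] [IsTopologicalAddGroup DE]
  [ContinuousSMul ℝ DE]
  [AddCommGroup ΓF] [Module ℝ ΓF] [TopologicalSpace ΓF] [IsTopologicalAddGroup ΓF]
  [ContinuousSMul ℝ ΓF]
  [AddCommGroup DF] [Module ℝ DF] [TopologicalSpace DF] [IsTopologicalAddGroup DF]
  [ContinuousSMul ℝ DF]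

/-- Push-forward of a net of vector smoothing operators along `μ`:
`(μ_*Φ)(u) = μ_*(Φ(μ^*u))`. -/
def pushVSOnet (μΓ : ΓE ≃L[ℝ] ΓF) (μD : DE ≃L[ℝ] DF) (Φ : ℝ → (DE →L[ℝ] ΓE)) :
    ℝ → (DF →L[ℝ] ΓF) :=
  fun ε => (μΓ : ΓE →L[ℝ] ΓF).comp ((Φ ε).comp (μD.symm : DF →L[ℝ] DE))

theorem ContinuousLinearEquiv.conjContinuousAlgEquiv_id {𝕜 X Y : Type*} [NormedField 𝕜]
    [AddCommGroup X] [Module 𝕜 X] [TopologicalSpace X] [IsTopologicalAddGroup X]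
    [ContinuousConstSMul 𝕜 X] [AddCommGroup Y] [Module 𝕜 Y] [TopologicalSpace Y]
    [IsTopologicalAddGroup Y] [ContinuousConstSMul 𝕜 Y] (e : X ≃L[𝕜] Y) :
    e.conjContinuousAlgEquiv (ContinuousLinearMap.id 𝕜 X) = ContinuousLinearMap.id 𝕜 Y :=
  map_one e.conjContinuousAlgEquiv

theorem uvso1_singleton_iff {U : Set M} {ev : ΓE → M → Fib} {van : DE → Set M → Prop}
    {mets : Set (M → M → ℝ)} {Φ : ℝ → (DE →L[ℝ] ΓE)} :
    UVSO1 U ev van mets {Φ} ↔ VSO1 U ev van mets Φ := by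
  simp only [UVSO1, VSO1, mem_singleton_iff, forall_eq]

theorem pushVSOnet_apply (μΓ : ΓE ≃L[ℝ] ΓF) (μD : DE ≃L[ℝ] DF) (Φ : ℝ → (DE →L[ℝ] ΓE))
    (ε : ℝ) : pushVSOnet μΓ μD Φ ε = μD.arrowCongr μΓ (Φ ε) :=
  rfl

theorem preimage_mball (f : M ≃ₜ N) (d : N → N → ℝ) (y : N) (r : ℝ) :
    f ⁻¹' mball d y r = mball (fun x x' => d (f x) (f x')) (f.symm y) r := by
  ext x
  simp [mball]

section Pushforward

variable {jE : ΓE →L[ℝ] DE} {jF : ΓF →L[ℝ] DF} {μΓ : ΓE ≃L[ℝ] ΓF} {μD : DE ≃L[ℝ] DF}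
  {f : M ≃ₜ N} {evE : ΓE → M → Fib} {vanE : DE → Set M → Prop} {metsE : Set (M → M → ℝ)}
  {evF : ΓF → N → Fib} {vanF : DF → Set N → Prop} {metsF : Set (N → N → ℝ)}

theorem comp_arrowCongr_of_comp_eq (hj : jF.comp (μΓ : ΓE →L[ℝ] ΓF) = (μD : DE →L[ℝ] DF).comp jE)
    (T : DE →L[ℝ] ΓE) :
    jF.comp (μD.arrowCongr μΓ T) = μD.conjContinuousAlgEquiv (jE.comp T) := by
  ext u
  simpa using DFunLike.congr_fun hj (T (μD.symm u))

theorem arrowCongr_comp_of_comp_eq (hj : jF.comp (μΓ : ΓE →L[ℝ] ΓF) = (μD : DE →L[ℝ] DF).comp jE)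
    (T : DE →L[ℝ] ΓE) :
    (μD.arrowCongr μΓ T).comp jF = μΓ.conjContinuousAlgEquiv (T.comp jE) := by
  ext s
  have hjs : μD.symm (jF s) = jE (μΓ.symm s) := by
    simpa using congr_arg μD.symm (DFunLike.congr_fun hj (μΓ.symm s))
  simp [hjs]

theorem VSO2.pushVSOnet (hj : jF.comp (μΓ : ΓE →L[ℝ] ΓF) = (μD : DE →L[ℝ] DF).comp jE)
    {Φ : ℝ → (DE →L[ℝ] ΓE)} (h : VSO2 jE Φ) : VSO2 jF (pushVSOnet μΓ μD Φ) := by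
  have := (μD.conjContinuousAlgEquiv.continuous.tendsto _).comp h
  simpa only [VSO2, Function.comp_def, pushVSOnet_apply, comp_arrowCongr_of_comp_eq hj,
    ContinuousLinearEquiv.conjContinuousAlgEquiv_id] using this

theorem VSO2'.pushVSOnet (hj : jF.comp (μΓ : ΓE →L[ℝ] ΓF) = (μD : DE →L[ℝ] DF).comp jE)
    {Φ : ℝ → (DE →L[ℝ] ΓE)} (h : VSO2' jE Φ) : VSO2' jF (pushVSOnet μΓ μD Φ) := by
  have := (μD.conjContinuousAlgEquiv.continuous.tendsto _).comp h
  simpa only [VSO2', Function.comp_def, pushVSOnet_apply, comp_arrowCongr_of_comp_eq hj,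
    map_zero] using this

theorem UVSO2.image_pushVSOnet (hj : jF.comp (μΓ : ΓE →L[ℝ] ΓF) = (μD : DE →L[ℝ] DF).comp jE)
    {S : Set (ℝ → (DE →L[ℝ] ΓE))} (h : UVSO2 jE S) : UVSO2 jF (pushVSOnet μΓ μD '' S) := by
  intro p hp
  simp only [forall_mem_image, pushVSOnet_apply, comp_arrowCongr_of_comp_eq hj,
    ← μD.conjContinuousAlgEquiv_id, ← map_sub]
  exact h (p.comp μD.conjContinuousAlgEquiv.toLinearMap)
    (hp.comp μD.conjContinuousAlgEquiv.continuous)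

theorem UVSO2'.image_pushVSOnet (hj : jF.comp (μΓ : ΓE →L[ℝ] ΓF) = (μD : DE →L[ℝ] DF).comp jE)
    {S : Set (ℝ → (DE →L[ℝ] ΓE))} (h : UVSO2' jE S) : UVSO2' jF (pushVSOnet μΓ μD '' S) := by
  intro p hp
  simp only [forall_mem_image, pushVSOnet_apply, comp_arrowCongr_of_comp_eq hj]
  exact h (p.comp μD.conjContinuousAlgEquiv.toLinearMap)
    (hp.comp μD.conjContinuousAlgEquiv.continuous)

theorem VSO3.pushVSOnet {Φ : ℝ → (DE →L[ℝ] ΓE)} (h : VSO3 Φ) : VSO3 (pushVSOnet μΓ μD Φ) :=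
  fun p hp => h (p.comp (μD.arrowCongr μΓ).toLinearMap) (hp.comp (μD.arrowCongr μΓ).continuous)

theorem UVSO3.image_pushVSOnet {S : Set (ℝ → (DE →L[ℝ] ΓE))} (h : UVSO3 S) :
    UVSO3 (pushVSOnet μΓ μD '' S) := by
  intro p hp
  simp only [forall_mem_image]
  exact h (p.comp (μD.arrowCongr μΓ).toLinearMap) (hp.comp (μD.arrowCongr μΓ).continuous)

theorem VSO4.pushVSOnet (hj : jF.comp (μΓ : ΓE →L[ℝ] ΓF) = (μD : DE →L[ℝ] DF).comp jE)
    {Φ : ℝ → (DE →L[ℝ] ΓE)} (h : VSO4 jE Φ) : VSO4 jF (pushVSOnet μΓ μD Φ) := by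
  intro p hp
  simp only [pushVSOnet_apply, arrowCongr_comp_of_comp_eq hj, ← μΓ.conjContinuousAlgEquiv_id,
    ← map_sub]
  exact h (p.comp μΓ.conjContinuousAlgEquiv.toLinearMap)
    (hp.comp μΓ.conjContinuousAlgEquiv.continuous)

theorem UVSO4.image_pushVSOnet (hj : jF.comp (μΓ : ΓE →L[ℝ] ΓF) = (μD : DE →L[ℝ] DF).comp jE)
    {S : Set (ℝ → (DE →L[ℝ] ΓE))} (h : UVSO4 jE S) : UVSO4 jF (pushVSOnet μΓ μD '' S) := by
  intro p hp
  simp only [forall_mem_image, pushVSOnet_apply, arrowCongr_comp_of_comp_eq hj,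
    ← μΓ.conjContinuousAlgEquiv_id, ← map_sub]
  exact h (p.comp μΓ.conjContinuousAlgEquiv.toLinearMap)
    (hp.comp μΓ.conjContinuousAlgEquiv.continuous)

theorem VSO4'.pushVSOnet (hj : jF.comp (μΓ : ΓE →L[ℝ] ΓF) = (μD : DE →L[ℝ] DF).comp jE)
    {Φ : ℝ → (DE →L[ℝ] ΓE)} (h : VSO4' jE Φ) : VSO4' jF (pushVSOnet μΓ μD Φ) := by
  intro p hp
  simp only [pushVSOnet_apply, arrowCongr_comp_of_comp_eq hj]
  exact h (p.comp μΓ.conjContinuousAlgEquiv.toLinearMap)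
    (hp.comp μΓ.conjContinuousAlgEquiv.continuous)

theorem UVSO4'.image_pushVSOnet (hj : jF.comp (μΓ : ΓE →L[ℝ] ΓF) = (μD : DE →L[ℝ] DF).comp jE)
    {S : Set (ℝ → (DE →L[ℝ] ΓE))} (h : UVSO4' jE S) : UVSO4' jF (pushVSOnet μΓ μD '' S) := by
  intro p hp
  simp only [forall_mem_image, pushVSOnet_apply, arrowCongr_comp_of_comp_eq hj]
  exact h (p.comp μΓ.conjContinuousAlgEquiv.toLinearMap)
    (hp.comp μΓ.conjContinuousAlgEquiv.continuous)

theorem UVSO1.image_pushVSOnet (hev : ∀ s x, evE s x = 0 → evF (μΓ s) (f x) = 0)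
    (hvan : ∀ v A, vanF v A → vanE (μD.symm v) (f ⁻¹' A))
    (hmets : ∀ d ∈ metsF, (fun x y : M => d (f x) (f y)) ∈ metsE)
    {U : Set M} {S : Set (ℝ → (DE →L[ℝ] ΓE))} (h : UVSO1 U evE vanE metsE S) :
    UVSO1 (f.symm ⁻¹' U) evF vanF metsF (pushVSOnet μΓ μD '' S) := by
  intro d hd y₀ hy₀
  obtain ⟨V, hVo, hy₀V, hVU, hV⟩ := h _ (hmets d hd) _ hy₀
  refine ⟨f.symm ⁻¹' V, hVo.preimage f.symm.continuous, hy₀V, preimage_mono hVU, fun r hr => ?_⟩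
  obtain ⟨ε₀, hε₀, H⟩ := hV r hr
  refine ⟨ε₀, hε₀, ?_⟩
  rintro _ ⟨Φ, hΦ, rfl⟩ ε hε hεε₀ y hy u hu
  have hu' := preimage_mball f d y r ▸ hvan u _ hu
  simpa [pushVSOnet_apply] using hev _ _ (H Φ hΦ ε hε hεε₀ _ hy _ hu')

theorem VSO1.pushVSOnet (hev : ∀ s x, evE s x = 0 → evF (μΓ s) (f x) = 0)
    (hvan : ∀ v A, vanF v A → vanE (μD.symm v) (f ⁻¹' A))
    (hmets : ∀ d ∈ metsF, (fun x y : M => d (f x) (f y)) ∈ metsE)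
    {U : Set M} {Φ : ℝ → (DE →L[ℝ] ΓE)} (h : VSO1 U evE vanE metsE Φ) :
    VSO1 (f.symm ⁻¹' U) evF vanF metsF (pushVSOnet μΓ μD Φ) := by
  rw [← uvso1_singleton_iff, ← image_singleton]
  exact (uvso1_singleton_iff.2 h).image_pushVSOnet hev hvan hmets

theorem IsTestObject.pushVSOnet
    (hj : jF.comp (μΓ : ΓE →L[ℝ] ΓF) = (μD : DE →L[ℝ] DF).comp jE)
    (hev : ∀ s x, evE s x = 0 → evF (μΓ s) (f x) = 0)
    (hvan : ∀ v A, vanF v A → vanE (μD.symm v) (f ⁻¹' A))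
    (hmets : ∀ d ∈ metsF, (fun x y : M => d (f x) (f y)) ∈ metsE)
    {U : Set M} {Φ : ℝ → (DE →L[ℝ] ΓE)} (h : IsTestObject U jE evE vanE metsE Φ) :
    IsTestObject (f.symm ⁻¹' U) jF evF vanF metsF (pushVSOnet μΓ μD Φ) :=
  ⟨h.1.pushVSOnet hev hvan hmets, h.2.1.pushVSOnet hj, h.2.2.1.pushVSOnet,
    h.2.2.2.pushVSOnet hj⟩

theorem IsZeroTestObject.pushVSOnet
    (hj : jF.comp (μΓ : ΓE →L[ℝ] ΓF) = (μD : DE →L[ℝ] DF).comp jE)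
    (hev : ∀ s x, evE s x = 0 → evF (μΓ s) (f x) = 0)
    (hvan : ∀ v A, vanF v A → vanE (μD.symm v) (f ⁻¹' A))
    (hmets : ∀ d ∈ metsF, (fun x y : M => d (f x) (f y)) ∈ metsE)
    {U : Set M} {Φ : ℝ → (DE →L[ℝ] ΓE)} (h : IsZeroTestObject U jE evE vanE metsE Φ) :
    IsZeroTestObject (f.symm ⁻¹' U) jF evF vanF metsF (pushVSOnet μΓ μD Φ) :=
  ⟨h.1.pushVSOnet hev hvan hmets, h.2.1.pushVSOnet hj, h.2.2.1.pushVSOnet,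
    h.2.2.2.pushVSOnet hj⟩

end Pushforward

/-- The push-forward `μ_*` along a vector bundle isomorphism over a
diffeomorphism preserves (VSO1)–(VSO4), (VSO2'), (VSO4') and their uniform variants;
in particular it maps test objects on `E` to test objects on `F` and 0-test objects
to 0-test objects. -/
theorem pushforward_preserves_test_objects
    (f : M ≃ₜ N)
    (jE : ΓE →L[ℝ] DE) (evE : ΓE → M → Fib) (vanE : DE → Set M → Prop)
    (metsE : Set (M → M → ℝ))
    (jF : ΓF →L[ℝ] DF) (evF : ΓF → N → Fib) (vanF : DF → Set N → Prop)
    (metsF : Set (N → N → ℝ))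
    (μΓ : ΓE ≃L[ℝ] ΓF) (μD : DE ≃L[ℝ] DF)
    -- the push-forwards commute with the inclusions of sections into distributions:
    (hj : jF.comp (μΓ : ΓE →L[ℝ] ΓF) = (μD : DE →L[ℝ] DF).comp jE)
    -- evaluation of sections corresponds under `μ` and `f`:
    (hev : ∀ (s : ΓE) (x : M), evE s x = 0 ↔ evF (μΓ s) (f x) = 0)
    -- vanishing of distributions on subsets corresponds under `μ` and `f`:
    (hvan : ∀ (v : DF) (A : Set N), vanF v A ↔ vanE (μD.symm v) (f ⁻¹' A))
    -- pullbacks of admissible Riemannian distance functions are admissible: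
    (hmets : ∀ d ∈ metsF, (fun x y : M => d (f x) (f y)) ∈ metsE) :
    (∀ Φ : ℝ → (DE →L[ℝ] ΓE),
      (VSO1 (univ : Set M) evE vanE metsE Φ →
        VSO1 (univ : Set N) evF vanF metsF (pushVSOnet μΓ μD Φ)) ∧
      (VSO2 jE Φ → VSO2 jF (pushVSOnet μΓ μD Φ)) ∧
      (VSO2' jE Φ → VSO2' jF (pushVSOnet μΓ μD Φ)) ∧
      (VSO3 Φ → VSO3 (pushVSOnet μΓ μD Φ)) ∧
      (VSO4 jE Φ → VSO4 jF (pushVSOnet μΓ μD Φ)) ∧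
      (VSO4' jE Φ → VSO4' jF (pushVSOnet μΓ μD Φ))) ∧
    (∀ S : Set (ℝ → (DE →L[ℝ] ΓE)),
      (UVSO1 (univ : Set M) evE vanE metsE S →
        UVSO1 (univ : Set N) evF vanF metsF (pushVSOnet μΓ μD '' S)) ∧
      (UVSO2 jE S → UVSO2 jF (pushVSOnet μΓ μD '' S)) ∧
      (UVSO2' jE S → UVSO2' jF (pushVSOnet μΓ μD '' S)) ∧
      (UVSO3 S → UVSO3 (pushVSOnet μΓ μD '' S)) ∧
      (UVSO4 jE S → UVSO4 jF (pushVSOnet μΓ μD '' S)) ∧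
      (UVSO4' jE S → UVSO4' jF (pushVSOnet μΓ μD '' S))) ∧
    (∀ Φ : ℝ → (DE →L[ℝ] ΓE),
      (IsTestObject (univ : Set M) jE evE vanE metsE Φ →
        IsTestObject (univ : Set N) jF evF vanF metsF (pushVSOnet μΓ μD Φ)) ∧
      (IsZeroTestObject (univ : Set M) jE evE vanE metsE Φ →
        IsZeroTestObject (univ : Set N) jF evF vanF metsF (pushVSOnet μΓ μD Φ))) := by
  have hev' : ∀ s x, evE s x = 0 → evF (μΓ s) (f x) = 0 := fun s x => (hev s x).1
  have hvan' : ∀ v A, vanF v A → vanE (μD.symm v) (f ⁻¹' A) := fun v A => (hvan v A).1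
  exact ⟨fun Φ => ⟨fun h => h.pushVSOnet hev' hvan' hmets, VSO2.pushVSOnet hj,
      VSO2'.pushVSOnet hj, VSO3.pushVSOnet, VSO4.pushVSOnet hj, VSO4'.pushVSOnet hj⟩,
    fun S => ⟨fun h => h.image_pushVSOnet hev' hvan' hmets, UVSO2.image_pushVSOnet hj,
      UVSO2'.image_pushVSOnet hj, UVSO3.image_pushVSOnet, UVSO4.image_pushVSOnet hj,
      UVSO4'.image_pushVSOnet hj⟩,
    fun Φ => ⟨fun h => h.pushVSOnet hj hev' hvan' hmets,
      fun h => h.pushVSOnet hj hev' hvan' hmets⟩⟩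

end Statement5
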